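/- The bivariate q-Laguerre polynomial L_n^{(α)}(x,y) satisfies the q-partial differential equation D_x{L_n^{(α)}(x,y) - q^α L_n^{(α)}(qx,y)} = -q^{α+1} D_y{L_n^{(α)}(q²x, y)}, where D_x and D_y denote the q-derivative in x and y respectively. -/

import Mathlib

open Finset

/-- q-shifted factorial (a;q)_n -/
noncomputable def qPoch (a q : ℝ) (n : ℕ) : ℝ := ∏ j ∈ Finset.range n, (1 - a * q ^ j)

/-- infinite q-shifted factorial (a;q)_∞ -/
noncomputable def qPochInf (a q : ℝ) : ℝ := ∏' j : ℕ, (1 - a * q ^ j)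

/-- q-binomial coefficient [n choose k]_q -/
noncomputable def qBinom (q : ℝ) (n k : ℕ) : ℝ :=
  qPoch q q n / (qPoch q q k * qPoch q q (n - k))

/-- q-derivative -/
noncomputable def Dq (q : ℝ) (f : ℝ → ℝ) (x : ℝ) : ℝ := (f x - f (q * x)) / x

/-- bivariate q-Laguerre polynomial L_n^{(α)}(x,y) -/
noncomputable def qLaguerre (q α : ℝ) (n : ℕ) (x y : ℝ) : ℝ :=
  ∑ k ∈ Finset.range (n + 1),
    (-1 : ℝ) ^ k * qBinom q n k * (q ^ ((k : ℝ) ^ 2 + (k : ℝ) * α)) /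
      qPoch (q ^ (α + 1)) q k * x ^ k * y ^ (n - k)

/-- bivariate little q-Jacobi polynomial p_n^{(α,β)}(x,y) -/
noncomputable def littleQJacobi (q a b : ℝ) (n : ℕ) (x y : ℝ) : ℝ :=
  ∑ k ∈ Finset.range (n + 1),
    (-1 : ℝ) ^ k * (q ^ (((k : ℝ) * ((k : ℝ) + 1 - 2 * (n : ℝ))) / 2)) * qBinom q n k *
      (qPoch (a * b * q ^ (n + 1)) q k / qPoch (a * q) q k) * x ^ k * y ^ (n - k)

/-! With `L_n^{(α)}(x,y) = ∑ c_k x^k y^(n-k)`, both sides of the equation are homogeneous of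
degree `n - 1`: `D_x` turns `c_{k+1} x^(k+1)` into `c_{k+1} (1 - q^(k+1)) x^k`, and `D_y` turns
`y^(n-k)` into `(1 - q^(n-k)) y^(n-k-1)`. Comparing coefficients of `x^k y^(n-k-1)` leaves the
first-order recurrence
`c_{k+1} (1 - q^(k+1)) (1 - q^(α+k+1)) = -q^(α+1+2k) (1 - q^(n-k)) c_k`,
which is the ratio of consecutive q-binomials, Gaussian factors `q^(k²+kα)` and
`(q^(α+1);q)_k`. -/

theorem qPoch_succ (a q : ℝ) (k : ℕ) : qPoch a q (k + 1) = qPoch a q k * (1 - a * q ^ k) :=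
  prod_range_succ _ _

theorem qPoch_self_eq_zero_of_lt {q : ℝ} {n k : ℕ} (hk : k < n) (h : 1 - q ^ (k + 1) = 0) :
    qPoch q q n = 0 :=
  prod_eq_zero (mem_range.2 hk) (by rw [← pow_succ']; exact h)

theorem qBinom_succ_mul (q : ℝ) {n k : ℕ} (hk : k < n) :
    qBinom q n (k + 1) * (1 - q ^ (k + 1)) = qBinom q n k * (1 - q ^ (n - k)) := by
  obtain ⟨m, hm⟩ : ∃ m, n - k = m + 1 := ⟨n - (k + 1), by omega⟩
  have hm' : n - (k + 1) = m := by omega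
  unfold qBinom
  rw [hm, hm', qPoch_succ, qPoch_succ, ← pow_succ', ← pow_succ']
  -- a vanishing factor `1 - q ^ j` with `1 ≤ j ≤ n` also kills `qPoch q q n`
  by_cases ha : 1 - q ^ (k + 1) = 0
  · simp [qPoch_self_eq_zero_of_lt hk ha]
  by_cases hb : 1 - q ^ (m + 1) = 0
  · simp [qPoch_self_eq_zero_of_lt (show m < n by omega) hb]
  calc _ = qPoch q q n * (1 - q ^ (k + 1)) / (qPoch q q k * qPoch q q m * (1 - q ^ (k + 1))) := by
        ring
    _ = qPoch q q n * (1 - q ^ (m + 1)) / (qPoch q q k * qPoch q q m * (1 - q ^ (m + 1))) := by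
        rw [mul_div_mul_right _ _ ha, mul_div_mul_right _ _ hb]
    _ = _ := by ring

noncomputable def homogeneousSum (c : ℕ → ℝ) (n : ℕ) (x y : ℝ) : ℝ :=
  ∑ k ∈ range (n + 1), c k * x ^ k * y ^ (n - k)

theorem homogeneousSum_sub_mul_mul_fst (c : ℕ → ℝ) (n : ℕ) (a b x y : ℝ) :
    homogeneousSum c n x y - b * homogeneousSum c n (a * x) y =
      homogeneousSum (fun k => c k * (1 - b * a ^ k)) n x y := by
  simp only [homogeneousSum, mul_sum, ← sum_sub_distrib]
  exact sum_congr rfl fun k _ => by ring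

theorem homogeneousSum_mul_fst (c : ℕ → ℝ) (n : ℕ) (a x y : ℝ) :
    homogeneousSum c n (a * x) y = homogeneousSum (fun k => c k * a ^ k) n x y :=
  sum_congr rfl fun k _ => by ring

theorem Dq_homogeneousSum_fst (q : ℝ) (c : ℕ → ℝ) (n : ℕ) {x : ℝ} (hx : x ≠ 0)
    (y : ℝ) :
    Dq q (fun u => homogeneousSum c n u y) x =
      ∑ k ∈ range n, c (k + 1) * (1 - q ^ (k + 1)) * x ^ k * y ^ (n - (k + 1)) := by
  unfold Dq homogeneousSum
  rw [← sum_sub_distrib, sum_div, sum_range_succ']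
  simp only [pow_zero, mul_one, sub_self, zero_div, add_zero]
  refine sum_congr rfl fun k _ => ?_
  field_simp
  ring

theorem Dq_homogeneousSum_snd (q : ℝ) (c : ℕ → ℝ) (n : ℕ) (x : ℝ) {y : ℝ}
    (hy : y ≠ 0) :
    Dq q (fun v => homogeneousSum c n x v) y =
      ∑ k ∈ range n, c k * (1 - q ^ (n - k)) * x ^ k * y ^ (n - (k + 1)) := by
  unfold Dq homogeneousSum
  rw [← sum_sub_distrib, sum_div, sum_range_succ]
  simp only [Nat.sub_self, pow_zero, mul_one, sub_self, zero_div, add_zero]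
  refine sum_congr rfl fun k hk => ?_
  rw [show n - k = n - (k + 1) + 1 by have := mem_range.1 hk; omega]
  field_simp
  ring

noncomputable def qLaguerreCoeff (q α : ℝ) (n k : ℕ) : ℝ :=
  (-1 : ℝ) ^ k * qBinom q n k * (q ^ ((k : ℝ) ^ 2 + (k : ℝ) * α)) / qPoch (q ^ (α + 1)) q k

theorem qLaguerre_eq_homogeneousSum (q α : ℝ) (n : ℕ) :
    qLaguerre q α n = homogeneousSum (qLaguerreCoeff q α n) n := rfl

theorem qLaguerreCoeff_succ_mul {q : ℝ} (hq : 0 < q) (α : ℝ) {n k : ℕ} (hk : k < n)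
    (hfac : 1 - q ^ (α + 1) * q ^ k ≠ 0) :
    qLaguerreCoeff q α n (k + 1) * ((1 - q ^ (k + 1)) * (1 - q ^ (α + 1) * q ^ k)) =
      -(q ^ (α + 1) * q ^ (2 * k)) * (1 - q ^ (n - k)) * qLaguerreCoeff q α n k := by
  have hexp : q ^ (((k + 1 : ℕ) : ℝ) ^ 2 + ((k + 1 : ℕ) : ℝ) * α) =
      q ^ ((k : ℝ) ^ 2 + (k : ℝ) * α) * q ^ (α + 1) * q ^ (2 * k) := by
    rw [← Real.rpow_natCast q (2 * k), ← Real.rpow_add hq, ← Real.rpow_add hq]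
    congr 1
    push_cast
    ring
  have hshift : qLaguerreCoeff q α n (k + 1) * (1 - q ^ (α + 1) * q ^ k) =
      -(q ^ (α + 1) * q ^ (2 * k)) * ((-1) ^ k * qBinom q n (k + 1) *
        q ^ ((k : ℝ) ^ 2 + (k : ℝ) * α) / qPoch (q ^ (α + 1)) q k) := by
    unfold qLaguerreCoeff
    rw [hexp, qPoch_succ, ← div_div, div_mul_cancel₀ _ hfac]
    ring
  unfold qLaguerreCoeff at hshift ⊢
  linear_combination (1 - q ^ (k + 1)) * hshift - (q ^ (α + 1) * q ^ (2 * k)) * (-1) ^ k *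
    q ^ ((k : ℝ) ^ 2 + (k : ℝ) * α) / qPoch (q ^ (α + 1)) q k * qBinom_succ_mul q hk

theorem rpow_mul_pow_lt_one {q s : ℝ} (hq : 0 < q) (hq1 : q < 1) (hs : 0 < s) (k : ℕ) :
    q ^ s * q ^ k < 1 := by
  rw [← Real.rpow_natCast, ← Real.rpow_add hq]
  exact Real.rpow_lt_one hq.le hq1 (by positivity)

theorem qLaguerre_qPDE (q α : ℝ) (hq : 0 < q) (hq1 : q < 1) (hα : -1 < α)
    (n : ℕ) (x y : ℝ) (hx : x ≠ 0) (hy : y ≠ 0) :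
    Dq q (fun u => qLaguerre q α n u y - q ^ α * qLaguerre q α n (q * u) y) x
      = -q ^ (α + 1) * Dq q (fun v => qLaguerre q α n (q ^ 2 * x) v) y := by
  set c := qLaguerreCoeff q α n
  have hlhs : (fun u => qLaguerre q α n u y - q ^ α * qLaguerre q α n (q * u) y) =
      fun u => homogeneousSum (fun k => c k * (1 - q ^ α * q ^ k)) n u y :=
    funext fun u => homogeneousSum_sub_mul_mul_fst c n q (q ^ α) u y
  have hrhs : (fun v => qLaguerre q α n (q ^ 2 * x) v) =
      fun v => homogeneousSum (fun k => c k * (q ^ 2) ^ k) n x v :=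
    funext fun v => homogeneousSum_mul_fst c n (q ^ 2) x v
  rw [hlhs, hrhs, Dq_homogeneousSum_fst q _ n hx, Dq_homogeneousSum_snd q _ n x hy, mul_sum]
  refine sum_congr rfl fun k hk => ?_
  have hk' := mem_range.1 hk
  have hne : 1 - q ^ (α + 1) * q ^ k ≠ 0 :=
    sub_ne_zero.2 (rpow_mul_pow_lt_one hq hq1 (by linarith) k).ne'
  have hpow : q ^ α * q ^ (k + 1) = q ^ (α + 1) * q ^ k := by
    rw [Real.rpow_add_one hq.ne']; ring
  rw [hpow]
  linear_combination x ^ k * y ^ (n - (k + 1)) * qLaguerreCoeff_succ_mul hq α hk' hne
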